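/- Let 1 < p ≤ 2 and C₁ > 0, C₂ ∈ ℝ. The radially symmetric function u(r) = -(4/(p-1))·ln(r^{p-1} + C₁) + C₂ on ℝ² \ {0} satisfies λ(A^u) ∈ ∂Γ_p, where λ₂(A^u) > 0 and λ₁(A^u) + (2-p)λ₂(A^u) = 0 at every point. -/

import Mathlib

/-- First eigenvalue of A^u for a radially symmetric function u(r). -/
noncomputable def lam1 (u : ℝ → ℝ) (r : ℝ) : ℝ :=
  (1 / (4 * Real.exp (u r))) * ((deriv u r) ^ 2 - 4 * deriv (deriv u) r)

/-- Second eigenvalue of A^u for a radially symmetric function u(r). -/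
noncomputable def lam2 (u : ℝ → ℝ) (r : ℝ) : ℝ :=
  -(1 / (4 * Real.exp (u r) * r)) * (deriv u r) * (4 + r * deriv u r)

def GammaP (p : ℝ) : Set (ℝ × ℝ) := {l | l.2 > (p - 2) * l.1 ∧ l.1 > (p - 2) * l.2}


/-! With `q = p - 1` and `S = r^q + C₁`, one computes `u' = -4 r^(q-1) / S` and
`u'' = -4 r^(q-2) ((q-1) C₁ - r^q) / S²`, whence `λ₂ = 4 C₁ r^(q-2) / (e^u S²) > 0` and
`λ₁ = (q - 1) λ₂ = (p - 2) λ₂`. Points `((p - 2) b, b)` with `b > 0` violate one of the strict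
inequalities defining the open cone `Γ_p`, yet are limits of the points
`((p - 2) b + t, b + t) ∈ Γ_p`, `t > 0`. -/

open Real Filter Topology

lemma isOpen_gammaP (p : ℝ) : IsOpen (GammaP p) :=
  (isOpen_lt (by fun_prop) continuous_snd).inter (isOpen_lt (by fun_prop) continuous_fst)

lemma mem_frontier_gammaP {p b : ℝ} (hp1 : 1 < p) (hp3 : p < 3) (hb : 0 < b) :
    ((p - 2) * b, b) ∈ frontier (GammaP p) := by
  refine ⟨?_, fun h => ?_⟩
  · have hlim : Tendsto (fun t : ℝ => ((p - 2) * b + t, b + t)) (𝓝[>] 0)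
        (𝓝 ((p - 2) * b, b)) := by
      have : Continuous fun t : ℝ => ((p - 2) * b + t, b + t) := by fun_prop
      exact (this.tendsto' 0 _ (by simp)).mono_left nhdsWithin_le_nhds
    refine mem_closure_of_tendsto hlim ?_
    filter_upwards [self_mem_nhdsWithin] with t (ht : 0 < t)
    have hcone : 0 < (p - 1) * (3 - p) := by nlinarith
    constructor <;> dsimp only <;> nlinarith [mul_pos hcone hb]
  · rw [(isOpen_gammaP p).interior_eq] at h
    exact lt_irrefl _ h.2

noncomputable def logProfile (q C₁ C₂ r : ℝ) : ℝ :=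
  -(4 / q) * Real.log (r ^ q + C₁) + C₂

section logProfile

variable {q C₁ r : ℝ}

lemma rpow_sub_one_eq_rpow_sub_two_mul (hr : 0 < r) : r ^ (q - 1) = r ^ (q - 2) * r := by
  rw [← rpow_add_one hr.ne']; ring_nf

lemma rpow_eq_rpow_sub_two_mul_mul (hr : 0 < r) : r ^ q = r ^ (q - 2) * r * r := by
  rw [← rpow_sub_one_eq_rpow_sub_two_mul hr, ← rpow_add_one hr.ne']; ring_nf

lemma hasDerivAt_logProfile (C₂ : ℝ) (hq : q ≠ 0) (hC : 0 ≤ C₁) (hr : 0 < r) :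
    HasDerivAt (logProfile q C₁ C₂) (-4 * r ^ (q - 1) / (r ^ q + C₁)) r := by
  have hS : 0 < r ^ q + C₁ := add_pos_of_pos_of_nonneg (rpow_pos_of_pos hr q) hC
  have hbase : HasDerivAt (fun x : ℝ => x ^ q + C₁) (q * r ^ (q - 1)) r :=
    (hasDerivAt_rpow_const (Or.inl hr.ne')).add_const C₁
  exact (((hbase.log hS.ne').const_mul (-(4 / q))).add_const C₂).congr_deriv (by field_simp)

lemma deriv_logProfile_eventuallyEq (C₂ : ℝ) (hq : q ≠ 0) (hC : 0 ≤ C₁) (hr : 0 < r) :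
    deriv (logProfile q C₁ C₂) =ᶠ[𝓝 r] fun x => -4 * x ^ (q - 1) / (x ^ q + C₁) := by
  filter_upwards [eventually_gt_nhds hr] with x hx
  exact (hasDerivAt_logProfile C₂ hq hC hx).deriv

lemma hasDerivAt_deriv_logProfile (C₂ : ℝ) (hq : q ≠ 0) (hC : 0 ≤ C₁) (hr : 0 < r) :
    HasDerivAt (deriv (logProfile q C₁ C₂))
      (-4 * r ^ (q - 2) * ((q - 1) * C₁ - r ^ q) / (r ^ q + C₁) ^ 2) r := by
  have hS : 0 < r ^ q + C₁ := add_pos_of_pos_of_nonneg (rpow_pos_of_pos hr q) hC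
  have hnum : HasDerivAt (fun x : ℝ => -4 * x ^ (q - 1)) (-4 * ((q - 1) * r ^ (q - 1 - 1))) r :=
    (hasDerivAt_rpow_const (Or.inl hr.ne')).const_mul (-4)
  have hden : HasDerivAt (fun x : ℝ => x ^ q + C₁) (q * r ^ (q - 1)) r :=
    (hasDerivAt_rpow_const (Or.inl hr.ne')).add_const C₁
  refine ((hnum.div hden hS.ne').congr_of_eventuallyEq
    (deriv_logProfile_eventuallyEq C₂ hq hC hr)).congr_deriv ?_
  rw [show q - 1 - 1 = q - 2 by ring, rpow_sub_one_eq_rpow_sub_two_mul hr,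
    rpow_eq_rpow_sub_two_mul_mul (q := q) hr]
  ring

lemma lam2_logProfile (C₂ : ℝ) (hq : q ≠ 0) (hC : 0 ≤ C₁) (hr : 0 < r) :
    lam2 (logProfile q C₁ C₂) r =
      4 * C₁ * r ^ (q - 2) / (exp (logProfile q C₁ C₂ r) * (r ^ q + C₁) ^ 2) := by
  have hS : 0 < r ^ q + C₁ := add_pos_of_pos_of_nonneg (rpow_pos_of_pos hr q) hC
  rw [lam2, (hasDerivAt_logProfile C₂ hq hC hr).deriv, rpow_sub_one_eq_rpow_sub_two_mul hr,
    rpow_eq_rpow_sub_two_mul_mul (q := q) hr]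
  rw [rpow_eq_rpow_sub_two_mul_mul (q := q) hr] at hS
  field_simp
  ring

lemma lam1_logProfile (C₂ : ℝ) (hq : q ≠ 0) (hC : 0 ≤ C₁) (hr : 0 < r) :
    lam1 (logProfile q C₁ C₂) r = (q - 1) * lam2 (logProfile q C₁ C₂) r := by
  have hS : 0 < r ^ q + C₁ := add_pos_of_pos_of_nonneg (rpow_pos_of_pos hr q) hC
  rw [lam2_logProfile C₂ hq hC hr, lam1, (hasDerivAt_logProfile C₂ hq hC hr).deriv,
    (hasDerivAt_deriv_logProfile C₂ hq hC hr).deriv, rpow_sub_one_eq_rpow_sub_two_mul hr,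
    rpow_eq_rpow_sub_two_mul_mul (q := q) hr]
  rw [rpow_eq_rpow_sub_two_mul_mul (q := q) hr] at hS
  field_simp
  ring

end logProfile

theorem stmt6 (p C₁ C₂ : ℝ) (hp1 : 1 < p) (hp2 : p ≤ 2) (hC : 0 < C₁)
    (u : ℝ → ℝ) (hu : ∀ r : ℝ, u r = -(4 / (p - 1)) * Real.log (r ^ (p - 1) + C₁) + C₂) :
    ∀ r : ℝ, 0 < r →
      0 < lam2 u r ∧ lam1 u r + (2 - p) * lam2 u r = 0 ∧
      (lam1 u r, lam2 u r) ∈ frontier (GammaP p) := by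
  intro r hr
  obtain rfl : u = logProfile (p - 1) C₁ C₂ := funext hu
  have hq : p - 1 ≠ 0 := by linarith
  have hlam1 :
      lam1 (logProfile (p - 1) C₁ C₂) r = (p - 2) * lam2 (logProfile (p - 1) C₁ C₂) r := by
    rw [lam1_logProfile C₂ hq hC.le hr]; ring
  have hlam2 : 0 < lam2 (logProfile (p - 1) C₁ C₂) r := by
    rw [lam2_logProfile C₂ hq hC.le hr]; positivity
  refine ⟨hlam2, by rw [hlam1]; ring, ?_⟩
  rw [hlam1]
  exact mem_frontier_gammaP hp1 (by linarith) hlam2
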